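/- For stars K_{1,s} and K_{1,t} with s, t ≥ 2, the total Roman domination number of their direct product satisfies γ_tR(K_{1,s} × K_{1,t}) = 7. -/

import Mathlib

open Finset

/-- A total Roman dominating function: labels in {0,1,2}, every 0-labeled vertex has a
2-labeled neighbor, and positive-labeled vertices induce a subgraph with no isolated vertex. -/
def IsTRDF {V : Type*} (G : SimpleGraph V) (f : V → ℕ) : Prop :=
  (∀ v, f v ≤ 2) ∧
  (∀ v, f v = 0 → ∃ u, G.Adj v u ∧ f u = 2) ∧
  (∀ v, 0 < f v → ∃ u, G.Adj v u ∧ 0 < f u)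

/-- The total Roman domination number. -/
noncomputable def trdn {V : Type*} (G : SimpleGraph V) [Fintype V] : ℕ :=
  sInf {w | ∃ f : V → ℕ, IsTRDF G f ∧ ∑ v, f v = w}

/-- A total dominating set. -/
def IsTotalDomSet {V : Type*} (G : SimpleGraph V) (D : Set V) : Prop :=
  ∀ v, ∃ u ∈ D, G.Adj v u

/-- The total domination number. -/
noncomputable def tdn {V : Type*} (G : SimpleGraph V) [Fintype V] : ℕ :=
  sInf {n | ∃ D : Finset V, IsTotalDomSet G ↑D ∧ D.card = n}

/-- A packing: pairwise disjoint closed neighborhoods. -/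
def IsPacking {V : Type*} (G : SimpleGraph V) (S : Set V) : Prop :=
  ∀ u ∈ S, ∀ v ∈ S, u ≠ v →
    Disjoint (insert u (G.neighborSet u)) (insert v (G.neighborSet v))

/-- The packing number. -/
noncomputable def packingNumber {V : Type*} (G : SimpleGraph V) [Fintype V] : ℕ :=
  sSup {n | ∃ S : Finset V, IsPacking G ↑S ∧ S.card = n}

/-- An open packing: pairwise disjoint open neighborhoods. -/
def IsOpenPacking {V : Type*} (G : SimpleGraph V) (S : Set V) : Prop :=
  ∀ u ∈ S, ∀ v ∈ S, u ≠ v → Disjoint (G.neighborSet u) (G.neighborSet v)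

/-- The open packing number. -/
noncomputable def openPackingNumber {V : Type*} (G : SimpleGraph V) [Fintype V] : ℕ :=
  sSup {n | ∃ S : Finset V, IsOpenPacking G ↑S ∧ S.card = n}

/-- The direct (tensor) product of two simple graphs. -/
def dirProd {V W : Type*} (G : SimpleGraph V) (H : SimpleGraph W) : SimpleGraph (V × W) where
  Adj p q := G.Adj p.1 q.1 ∧ H.Adj p.2 q.2
  symm := ⟨fun p q h => ⟨h.1.symm, h.2.symm⟩⟩
  loopless := ⟨fun p h => G.loopless.irrefl p.1 h.1⟩

/-- A graph with no isolated vertices. -/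
def NoIsolated {V : Type*} (G : SimpleGraph V) : Prop := ∀ v, ∃ u, G.Adj v u

/-- The star `K_{1,s}`: the center `0` is adjacent to the `s` leaves. -/
def starGraph (s : ℕ) : SimpleGraph (Fin (s + 1)) where
  Adj i j := (i = 0 ∧ j ≠ 0) ∨ (j = 0 ∧ i ≠ 0)
  symm := ⟨fun i j h => h.elim (fun h => Or.inr h) (fun h => Or.inl h)⟩
  loopless := ⟨fun i h => h.elim (fun h => h.2 h.1) (fun h => h.2 h.1)⟩

/-!
`K_{1,s} × K_{1,t}` has two components: the star centred at `(0, 0)` whose `s t` leaves are the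
vertices off both axes, and the complete bipartite graph `K_{s,t}` between the nonzero points of
the two axes. A total Roman dominating function has weight at least 3 on a star with at least
three leaves (a leaf labelled 0 forces a 2 on the centre, which needs a positive leaf) and at
least 4 on a complete bipartite graph with both sides of size at least 2. Labelling `(0, 0)`,
`(0, b)`, `(a, 0)` by 2 and `(a, b)` by 1 attains 7.
-/

theorem Finset.add_one_le_sum_of_pos {α : Type*} {X : Finset α} {f : α → ℕ} {u : α}
    (hu : u ∈ X) (hX : 2 ≤ #X) (hpos : ∀ v ∈ X, 0 < f v) : f u + 1 ≤ ∑ v ∈ X, f v := by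
  obtain ⟨v, hv, hvu⟩ := exists_mem_ne hX u
  have := add_le_sum (f := f) (fun _ _ => Nat.zero_le _) hu hv hvu.symm
  have := hpos v hv
  omega

theorem Finset.card_le_sum_of_pos {α : Type*} {X : Finset α} {f : α → ℕ}
    (hpos : ∀ v ∈ X, 0 < f v) : #X ≤ ∑ v ∈ X, f v := by
  simpa using card_nsmul_le_sum X f 1 hpos

theorem Finset.sum_univ_prod_eq_add_sum_add_sum_add_sum {α β M : Type*} [Fintype α] [Fintype β]
    [DecidableEq α] [DecidableEq β] [AddCommMonoid M] (f : α × β → M) (a : α) (b : β) :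
    ∑ p, f p = f (a, b) + ∑ p ∈ {a} ×ˢ univ.erase b, f p + ∑ p ∈ univ.erase a ×ˢ {b}, f p
      + ∑ p ∈ univ.erase a ×ˢ univ.erase b, f p := by
  simp only [Fintype.sum_prod_type, sum_product, sum_singleton]
  rw [← add_sum_erase _ _ (mem_univ a), ← add_sum_erase _ _ (mem_univ b)]
  simp only [← add_sum_erase _ _ (mem_univ b), sum_add_distrib]
  abel

namespace IsTRDF

variable {V : Type*} {G : SimpleGraph V} {f : V → ℕ}

theorem exists_mem_eq_two_of_eq_zero (hf : IsTRDF G f) {v : V} {Y : Finset V}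
    (hY : ∀ u, G.Adj v u → u ∈ Y) (hv : f v = 0) : ∃ u ∈ Y, f u = 2 := by
  obtain ⟨u, hvu, hu⟩ := hf.2.1 v hv
  exact ⟨u, hY u hvu, hu⟩

theorem three_le_add_sum_of_star (hf : IsTRDF G f) {c : V} {L : Finset V}
    (hc : ∀ u, G.Adj c u → u ∈ L) (hL : ∀ v ∈ L, ∀ u, G.Adj v u → u = c) (hcard : 3 ≤ #L) :
    3 ≤ f c + ∑ v ∈ L, f v := by
  by_cases hzero : ∃ v ∈ L, f v = 0
  · obtain ⟨v, hvL, hv⟩ := hzero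
    obtain ⟨u, hvu, hu⟩ := hf.2.1 v hv
    have hc2 : f c = 2 := hL v hvL u hvu ▸ hu
    obtain ⟨w, hcw, hw⟩ := hf.2.2 c (by omega)
    have := single_le_sum (f := f) (fun _ _ => Nat.zero_le _) (hc w hcw)
    omega
  · push Not at hzero
    have := card_le_sum_of_pos fun v hv => Nat.pos_of_ne_zero (hzero v hv)
    omega

section Biclique

variable {X Y : Finset V}

theorem four_le_sum_add_sum_of_eq_zero_of_pos (hf : IsTRDF G f)
    (hXY : ∀ v ∈ X, ∀ u, G.Adj v u → u ∈ Y) (hYX : ∀ v ∈ Y, ∀ u, G.Adj v u → u ∈ X)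
    (hY : 2 ≤ #Y) {v : V} (hv : v ∈ X) (hv0 : f v = 0) (hpos : ∀ u ∈ Y, 0 < f u) :
    4 ≤ ∑ v ∈ X, f v + ∑ v ∈ Y, f v := by
  obtain ⟨u, huY, hu⟩ := hf.exists_mem_eq_two_of_eq_zero (hXY v hv) hv0
  obtain ⟨w, huw, hw⟩ := hf.2.2 u (by omega)
  have := single_le_sum (f := f) (fun _ _ => Nat.zero_le _) (hYX u huY w huw)
  have := add_one_le_sum_of_pos huY hY hpos
  omega

theorem four_le_sum_add_sum_of_biclique (hf : IsTRDF G f)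
    (hXY : ∀ v ∈ X, ∀ u, G.Adj v u → u ∈ Y) (hYX : ∀ v ∈ Y, ∀ u, G.Adj v u → u ∈ X)
    (hX : 2 ≤ #X) (hY : 2 ≤ #Y) : 4 ≤ ∑ v ∈ X, f v + ∑ v ∈ Y, f v := by
  by_cases hX0 : ∃ v ∈ X, f v = 0 <;> by_cases hY0 : ∃ v ∈ Y, f v = 0
  · obtain ⟨v, hvX, hv⟩ := hX0
    obtain ⟨w, hwY, hw⟩ := hY0
    obtain ⟨v', hv'Y, hv'⟩ := hf.exists_mem_eq_two_of_eq_zero (hXY v hvX) hv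
    obtain ⟨w', hw'X, hw'⟩ := hf.exists_mem_eq_two_of_eq_zero (hYX w hwY) hw
    have := single_le_sum (f := f) (fun _ _ => Nat.zero_le _) hv'Y
    have := single_le_sum (f := f) (fun _ _ => Nat.zero_le _) hw'X
    omega
  · obtain ⟨v, hvX, hv⟩ := hX0
    push Not at hY0
    exact hf.four_le_sum_add_sum_of_eq_zero_of_pos hXY hYX hY hvX hv
      fun u hu => Nat.pos_of_ne_zero (hY0 u hu)
  · obtain ⟨w, hwY, hw⟩ := hY0
    push Not at hX0
    rw [add_comm]
    exact hf.four_le_sum_add_sum_of_eq_zero_of_pos hYX hXY hX hwY hw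
      fun u hu => Nat.pos_of_ne_zero (hX0 u hu)
  · push Not at hX0 hY0
    have := card_le_sum_of_pos fun v hv => Nat.pos_of_ne_zero (hX0 v hv)
    have := card_le_sum_of_pos fun v hv => Nat.pos_of_ne_zero (hY0 v hv)
    omega

end Biclique

end IsTRDF

theorem trdn_le_sum {V : Type*} [Fintype V] {G : SimpleGraph V} {f : V → ℕ} (hf : IsTRDF G f) :
    trdn G ≤ ∑ v, f v :=
  Nat.sInf_le ⟨f, hf, rfl⟩

theorem le_trdn {V : Type*} [Fintype V] {G : SimpleGraph V} {n : ℕ} (hG : ∃ f, IsTRDF G f)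
    (h : ∀ f, IsTRDF G f → n ≤ ∑ v, f v) : n ≤ trdn G := by
  obtain ⟨f, hf⟩ := hG
  exact le_csInf ⟨_, f, hf, rfl⟩ fun _ ⟨g, hg, hsum⟩ => hsum ▸ h g hg

theorem starGraph_adj {s : ℕ} {i j : Fin (s + 1)} : (starGraph s).Adj i j ↔ (i = 0 ↔ j ≠ 0) := by
  change (i = 0 ∧ j ≠ 0) ∨ (j = 0 ∧ i ≠ 0) ↔ _
  tauto

theorem dirProd_adj {V W : Type*} {G : SimpleGraph V} {H : SimpleGraph W} {p q : V × W} :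
    (dirProd G H).Adj p q ↔ G.Adj p.1 q.1 ∧ H.Adj p.2 q.2 :=
  Iff.rfl

section StarProduct

variable {s t : ℕ}

theorem three_le_add_sum_offAxes (hs : 2 ≤ s) (ht : 2 ≤ t) {f : Fin (s + 1) × Fin (t + 1) → ℕ}
    (hf : IsTRDF (dirProd (starGraph s) (starGraph t)) f) :
    3 ≤ f (0, 0) + ∑ p ∈ univ.erase 0 ×ˢ univ.erase 0, f p := by
  refine hf.three_le_add_sum_of_star ?_ ?_ ?_
  · intro u hu
    simp_all [dirProd_adj, starGraph_adj]
  · intro v hv u hvu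
    simp_all [dirProd_adj, starGraph_adj, Prod.ext_iff]
  · simp only [card_product, card_erase_of_mem (mem_univ _), card_univ, Fintype.card_fin,
      Nat.add_sub_cancel]
    nlinarith

theorem four_le_sum_add_sum_axes (hs : 2 ≤ s) (ht : 2 ≤ t) {f : Fin (s + 1) × Fin (t + 1) → ℕ}
    (hf : IsTRDF (dirProd (starGraph s) (starGraph t)) f) :
    4 ≤ ∑ p ∈ {0} ×ˢ univ.erase 0, f p + ∑ p ∈ univ.erase 0 ×ˢ {0}, f p := by
  refine hf.four_le_sum_add_sum_of_biclique ?_ ?_ ?_ ?_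
  · intro v hv u hvu
    simp only [mem_product, mem_singleton, mem_erase, mem_univ, and_true] at hv ⊢
    simp_all [dirProd_adj, starGraph_adj]
  · intro v hv u hvu
    simp only [mem_product, mem_singleton, mem_erase, mem_univ, and_true] at hv ⊢
    simp_all [dirProd_adj, starGraph_adj]
  all_goals
    simp only [card_product, card_singleton, card_erase_of_mem (mem_univ _), card_univ,
      Fintype.card_fin]
    omega

def squareLabel (a : Fin (s + 1)) (b : Fin (t + 1)) (p : Fin (s + 1) × Fin (t + 1)) : ℕ :=
  if p ∈ ({0, a} : Finset _) ×ˢ ({0, b} : Finset _) then if p = (a, b) then 1 else 2 else 0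

theorem sum_squareLabel {a : Fin (s + 1)} {b : Fin (t + 1)} (ha : a ≠ 0) (hb : b ≠ 0) :
    ∑ p, squareLabel a b p = 7 := by
  simp only [squareLabel]
  rw [Fintype.sum_ite_mem, sum_product]
  simp [ha.symm, hb.symm]

theorem isTRDF_squareLabel {a : Fin (s + 1)} {b : Fin (t + 1)} (ha : a ≠ 0) (hb : b ≠ 0) :
    IsTRDF (dirProd (starGraph s) (starGraph t)) (squareLabel a b) := by
  have ha' := ha.symm
  have hb' := hb.symm
  refine ⟨fun p => ?_, fun ⟨i, j⟩ hp => ?_, fun ⟨i, j⟩ hp => ?_⟩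
  · unfold squareLabel
    split_ifs <;> omega
  · by_cases hi : i = 0 <;> by_cases hj : j = 0
    · simp [squareLabel, hi, hj, ha'] at hp
    · exact ⟨(a, 0), by simp_all [dirProd_adj, starGraph_adj, squareLabel]⟩
    · exact ⟨(0, b), by simp_all [dirProd_adj, starGraph_adj, squareLabel]⟩
    · exact ⟨(0, 0), by simp_all [dirProd_adj, starGraph_adj, squareLabel]⟩
  · have hsq : (i = 0 ∨ i = a) ∧ (j = 0 ∨ j = b) := by
      by_contra h
      simp [squareLabel, h] at hp
    obtain ⟨rfl | rfl, rfl | rfl⟩ := hsq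
    · exact ⟨(a, b), by simp_all [dirProd_adj, starGraph_adj, squareLabel]⟩
    · exact ⟨(a, 0), by simp_all [dirProd_adj, starGraph_adj, squareLabel]⟩
    · exact ⟨(0, b), by simp_all [dirProd_adj, starGraph_adj, squareLabel]⟩
    · exact ⟨(0, 0), by simp_all [dirProd_adj, starGraph_adj, squareLabel]⟩

theorem seven_le_sum_of_isTRDF (hs : 2 ≤ s) (ht : 2 ≤ t) {f : Fin (s + 1) × Fin (t + 1) → ℕ}
    (hf : IsTRDF (dirProd (starGraph s) (starGraph t)) f) : 7 ≤ ∑ p, f p := by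
  rw [sum_univ_prod_eq_add_sum_add_sum_add_sum f 0 0]
  have := three_le_add_sum_offAxes hs ht hf
  have := four_le_sum_add_sum_axes hs ht hf
  omega

end StarProduct

theorem stmt_18 (s t : ℕ) (hs : 2 ≤ s) (ht : 2 ≤ t) :
    trdn (dirProd (starGraph s) (starGraph t)) = 7 := by
  have ha : Fin.last s ≠ 0 := Fin.ne_of_val_ne (by rw [Fin.val_last, Fin.val_zero]; omega)
  have hb : Fin.last t ≠ 0 := Fin.ne_of_val_ne (by rw [Fin.val_last, Fin.val_zero]; omega)
  have hf := isTRDF_squareLabel ha hb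
  refine le_antisymm ?_ (le_trdn ⟨_, hf⟩ fun g hg => seven_le_sum_of_isTRDF hs ht hg)
  calc trdn _ ≤ ∑ p, squareLabel _ _ p := trdn_le_sum hf
    _ = 7 := sum_squareLabel ha hb
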